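/- arXiv:1009.3777 — 5 statements merged into one kernel-verified Lean document; each statement's English description precedes it below -/
import Mathlib

section
/- Let f : ℚ/ℤ → ℕ be a function whose support is contained in ((1/e)ℤ)/ℤ. If there exists a polynomial Q(t) ∈ ℤ[t] that is a product of F-tame cyclotomic polynomials (i.e. of cyclotomic polynomials Φ_d(t) with d prime to the characteristic exponent of F) such that P_{f,ζ}(t) = ρ(Q(t)), then f is complete. -/
/-!
Compare the multiplicity of `ζ ^ b` (for `b < e`) as a root of both sides. The `ζ ^ a`, `a < e`,
are distinct, so on the left it is `f (b / e)`. On the right, each `Φ_d` with `(d : F) ≠ 0` is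
separable with roots exactly the primitive `d`-th roots of unity, so it is the number of times
`orderOf (ζ ^ b)` occurs in `s`; and `orderOf (ζ ^ b) = e / gcd e b` is the order of `b / e` in
`ℚ/ℤ`. Hence `f` depends only on the order on the `e`-torsion, and vanishes off it.
-/

open Polynomial

namespace Polynomial

variable {K : Type*} [CommRing K] [IsDomain K] [DecidableEq K]

theorem count_roots_cyclotomic {d : ℕ} [NeZero (d : K)] (z : K) :
    (cyclotomic d K).roots.count z = if orderOf z = d then 1 else 0 := by
  rw [cyclotomic.roots_eq_primitiveRoots_val, Multiset.count_eq_of_nodup (primitiveRoots d K).nodup]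
  simp only [Finset.mem_val, mem_primitiveRoots (NeZero.pos_of_neZero_natCast K),
    IsPrimitiveRoot.iff_orderOf]

theorem count_roots_multiset_prod_cyclotomic {s : Multiset ℕ} (hs : ∀ d ∈ s, (d : K) ≠ 0) (z : K) :
    (s.map fun d => cyclotomic d K).prod.roots.count z = s.count (orderOf z) := by
  induction s using Multiset.induction_on with
  | empty => simp
  | cons d s ih =>
    have : NeZero (d : K) := ⟨hs d (Multiset.mem_cons_self d s)⟩
    rw [Multiset.map_cons, Multiset.prod_cons, roots_mul, Multiset.count_add,
      count_roots_cyclotomic, ih fun d' hd' => hs d' (Multiset.mem_cons_of_mem hd'),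
      Multiset.count_cons, add_comm]
    exact mul_ne_zero (cyclotomic_ne_zero d K) (Multiset.prod_ne_zero fun h => by
      obtain ⟨d', -, hd'⟩ := Multiset.mem_map.1 h
      exact cyclotomic_ne_zero d' K hd')

theorem count_roots_prod_X_sub_C_pow {ι : Type*} {S : Finset ι} {v : ι → K}
    (hv : Set.InjOn v S) (g : ι → ℕ) {b : ι} (hb : b ∈ S) :
    (∏ a ∈ S, (X - C (v a)) ^ g a).roots.count (v b) = g b := by
  rw [roots_prod _ _ (Finset.prod_ne_zero_iff.2 fun a _ => pow_ne_zero _ (X_sub_C_ne_zero _)),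
    Multiset.count_bind]
  change ∑ a ∈ S, ((X - C (v a)) ^ g a).roots.count (v b) = g b
  simp only [roots_pow, roots_X_sub_C, Multiset.count_nsmul, Multiset.count_singleton]
  rw [Finset.sum_eq_single_of_mem b hb fun a ha hab => by
    rw [if_neg fun h => hab (hv ha hb h.symm), mul_zero]]
  simp

end Polynomial

theorem IsPrimitiveRoot.orderOf_pow_eq_addOrderOf_coe {M 𝕜 : Type*} [CommMonoid M]
    [Field 𝕜] [LinearOrder 𝕜] [IsStrictOrderedRing 𝕜] {p : 𝕜} [Fact (0 < p)] {ζ : M} {e : ℕ}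
    (hζ : IsPrimitiveRoot ζ e) (he : 0 < e) (b : ℕ) :
    orderOf (ζ ^ b) = addOrderOf (((b : 𝕜) / e * p : 𝕜) : AddCircle p) := by
  refine Nat.eq_of_mul_eq_mul_left (Nat.gcd_pos_of_pos_right b he) ?_
  rw [AddCircle.gcd_mul_addOrderOf_div_eq p b he, (hζ.isOfFinOrder he.ne').orderOf_pow,
    ← hζ.eq_orderOf, Nat.gcd_comm, Nat.mul_div_cancel' (Nat.gcd_dvd_left e b)]

theorem complete_of_prod_eq_map_tame_cyclotomic_general
    (F : Type*) [Field F]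
    (e : ℕ) (he : 0 < e)
    (f : AddCircle (1 : ℚ) → ℕ)
    (hsupp : ∀ x : AddCircle (1 : ℚ), f x ≠ 0 → (e : ℤ) • x = 0)
    (ζ : F) (hζ : IsPrimitiveRoot ζ e)
    (Q : Polynomial ℤ) (s : Multiset ℕ)
    (hs : ∀ d ∈ s, 0 < d ∧ (d : F) ≠ 0)
    (hQ : Q = (s.map fun d => cyclotomic d ℤ).prod)
    (hPQ : ∏ a ∈ Finset.range e,
        (X - C (ζ ^ a)) ^ f (((a : ℚ) / (e : ℚ) : ℚ) : AddCircle (1 : ℚ)) =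
      Polynomial.map (Int.castRingHom F) Q) :
    ∀ x y : AddCircle (1 : ℚ), addOrderOf x = addOrderOf y → f x = f y := by
  classical
  have hf_div : ∀ b < e, f (((b : ℚ) / e : ℚ) : AddCircle (1 : ℚ)) = s.count (orderOf (ζ ^ b)) := by
    intro b hb
    have := congrArg (fun P => P.roots.count (ζ ^ b)) hPQ
    simp only [hQ, Polynomial.map_multiset_prod, Multiset.map_map, Function.comp_def,
      map_cyclotomic] at this
    rwa [count_roots_prod_X_sub_C_pow hζ.injOn_pow _ (Finset.mem_range.2 hb),
      count_roots_multiset_prod_cyclotomic fun d hd => (hs d hd).2] at this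
  have hf_torsion (z : AddCircle (1 : ℚ)) (hz : addOrderOf z ∣ e) :
      f z = s.count (addOrderOf z) := by
    obtain ⟨b, hb, rfl⟩ :=
      (AddCircle.nsmul_eq_zero_iff he).1 (addOrderOf_dvd_iff_nsmul_eq_zero.1 hz)
    rw [mul_one, hf_div b hb, hζ.orderOf_pow_eq_addOrderOf_coe (p := (1 : ℚ)) he b, mul_one]
  have hf_zero (z : AddCircle (1 : ℚ)) (hz : ¬ addOrderOf z ∣ e) : f z = 0 := by
    by_contra h
    exact hz (addOrderOf_dvd_of_nsmul_eq_zero (by simpa using hsupp z h))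
  intro x y hxy
  by_cases hx : addOrderOf x ∣ e
  · rw [hf_torsion x hx, hf_torsion y (hxy ▸ hx), hxy]
  · rw [hf_zero x hx, hf_zero y (hxy ▸ hx)]

/-- Let `f : ℚ/ℤ → ℕ` be supported on `((1/e)ℤ)/ℤ` (the `e`-torsion of `ℚ/ℤ`), let `F` be
an algebraically closed field whose characteristic exponent is prime to `e`, and let
`ζ ∈ F` be a primitive `e`-th root of unity. If there is a polynomial `Q ∈ ℤ[t]` that is
a product of `F`-tame cyclotomic polynomials (cyclotomic polynomials `Φ_d` with `d` prime
to the characteristic exponent of `F`) such that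
`P_{f,ζ}(t) = ∏_{a < e} (t - ζ^a)^{f(a/e)} = ρ(Q)`, where `ρ : ℤ[t] → F[t]` is the
canonical ring morphism, then `f` is complete: `f x` depends only on the order of `x` in
`ℚ/ℤ`. -/
theorem complete_of_prod_eq_map_tame_cyclotomic
    (F : Type*) [Field F] [IsAlgClosed F]
    (e : ℕ) (he : 0 < e) (heF : (e : F) ≠ 0)
    (f : AddCircle (1 : ℚ) → ℕ)
    (hsupp : ∀ x : AddCircle (1 : ℚ), f x ≠ 0 → (e : ℤ) • x = 0)
    (ζ : F) (hζ : IsPrimitiveRoot ζ e)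
    (Q : Polynomial ℤ) (s : Multiset ℕ)
    (hs : ∀ d ∈ s, 0 < d ∧ (d : F) ≠ 0)
    (hQ : Q = (s.map fun d => cyclotomic d ℤ).prod)
    (hPQ : ∏ a ∈ Finset.range e,
        (X - C (ζ ^ a)) ^ f (((a : ℚ) / (e : ℚ) : ℚ) : AddCircle (1 : ℚ)) =
      Polynomial.map (Int.castRingHom F) Q) :
    ∀ x y : AddCircle (1 : ℚ), addOrderOf x = addOrderOf y → f x = f y :=
  complete_of_prod_eq_map_tame_cyclotomic_general F e he f hsupp ζ hζ Q s hs hQ hPQ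
end

section
/- Let F be an algebraically closed field of characteristic zero, V a finite-dimensional F-vector space, M an endomorphism of V, and d > 0 an integer such that M^d is unipotent. Set W = ker(M^d − id). Assume that (M^d − id)(V) ⊆ W, and that there exist an M-stable subspace W′ ⊆ W and an isomorphism φ : (V/W)^∨ → W′ satisfying φ ∘ (M̄)^∨ = (M|_{W′}) ∘ φ, where M̄ is the endomorphism induced by M on V/W and (M̄)^∨ its dual. Then (M^d − id)² = 0, and for every α ∈ F: (i) dim ker((M − α·id)²) − dim ker(M − α·id) = dim ker((M − α·id)|_{W′}), i.e. the number of Jordan blocks of M of size two with eigenvalue α equals the multiplicity of α as an eigenvalue of M on W′; and (ii) 2·dim ker(M − α·id) − dim ker((M − α·id)²) = dim ker(M̃ − α·id), where M̃ is the endomorphism induced by M on W/W′, i.e. the number of Jordan blocks of M of size one with eigenvalue α equals the multiplicity of α as an eigenvalue of M on W/W′. -/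
/-!
Since `M ^ d` is unipotent, every eigenvector of `M` lies in `W = ker (M ^ d - 1)`, and on `W`
the endomorphism `M` is a root of the separable polynomial `X ^ d - 1`, hence semisimple.
Writing `N = M - α`, semisimplicity on `W` gives `W ∩ ker N² = ker N` and `N⁻¹(W) = W + ker N²`,
so `dim ker N² - dim ker N` is the dimension of the kernel of `N` on `V / W`. Dualising and
transporting along `φ`, this is the dimension of the kernel of `N` on `W'`. Finally, kernels of a
semisimple endomorphism are additive along invariant subspaces; applied to `N` on `W` and its
invariant subspace `W'`, this gives the count of blocks of size one.
-/

open Module LinearMap Submodule Polynomial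

section LinearAlgebra

variable {K U U' : Type*} [Field K] [AddCommGroup U] [Module K U] [AddCommGroup U'] [Module K U']

theorem Submodule.finrank_comap_subtype (p q : Submodule K U) :
    finrank K (q.comap p.subtype) = finrank K ↥(p ⊓ q) := by
  rw [← finrank_map_subtype_eq, map_comap_subtype]

theorem LinearMap.finrank_ker_restrict {p : Submodule K U} {q : Submodule K U'} (f : U →ₗ[K] U')
    (h : ∀ x ∈ p, f x ∈ q) : finrank K (ker (f.restrict h)) = finrank K ↥(p ⊓ ker f) := by
  rw [ker_restrict, finrank_comap_subtype]

theorem Submodule.mapQ_sub_smul_id {p : Submodule K U} {f g : U →ₗ[K] U} (hf : p ≤ p.comap f)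
    (hg : p ≤ p.comap g) {α : K} (hfg : g = f - α • LinearMap.id) :
    p.mapQ p f hf - α • LinearMap.id = p.mapQ p g hg := by
  subst hfg
  ext
  simp

theorem LinearEquiv.finrank_ker_eq_of_comp_eq (e : U ≃ₗ[K] U') {f : U →ₗ[K] U}
    {g : U' →ₗ[K] U'} (h : ∀ x, e (f x) = g (e x)) : finrank K (ker f) = finrank K (ker g) := by
  have hcomp : (e : U →ₗ[K] U') ∘ₗ f = g ∘ₗ e := LinearMap.ext h
  rw [← e.ker_comp f, hcomp, LinearMap.ker_comp, comap_equiv_eq_map_symm, e.symm.finrank_map_eq]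

variable [FiniteDimensional K U]

theorem LinearMap.finrank_map_add_finrank_inf_ker (g : U →ₗ[K] U') (S : Submodule K U) :
    finrank K (S.map g) + finrank K ↥(S ⊓ ker g) = finrank K S := by
  have := (g.domRestrict S).finrank_range_add_finrank_ker
  rwa [range_domRestrict, ker_domRestrict, finrank_comap_subtype] at this

theorem Submodule.finrank_ker_mapQ_add_finrank (g : U →ₗ[K] U) (S : Submodule K U)
    (h : S ≤ S.comap g) : finrank K (ker (S.mapQ S g h)) + finrank K S = finrank K (S.comap g) := by
  have := S.mkQ.finrank_map_add_finrank_inf_ker (S.comap g)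
  rwa [ker_mkQ, inf_eq_right.mpr h, ← ker_mapQ] at this

theorem LinearMap.finrank_ker_dualMap_sub_smul (f : U →ₗ[K] U) (α : K) :
    finrank K (ker (f.dualMap - α • LinearMap.id)) = finrank K (ker (f - α • LinearMap.id)) := by
  have hdual : f.dualMap - α • LinearMap.id = (f - α • LinearMap.id).dualMap := by
    ext
    simp
  rw [hdual]
  set g := f - α • LinearMap.id
  have := g.dualMap.finrank_range_add_finrank_ker
  have := g.finrank_range_add_finrank_ker
  have := g.finrank_range_dualMap_eq_finrank_range
  have : finrank K (Dual K U) = finrank K U := Subspace.dual_finrank_eq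
  omega

end LinearAlgebra

namespace Module.End

variable {K U : Type*} [Field K] [AddCommGroup U] [Module K U]

theorem ker_sub_smul_le_ker_aeval_of_isNilpotent (f : End K U) (p : K[X])
    (hp : IsNilpotent (aeval f p)) (α : K) : ker (f - α • LinearMap.id) ≤ ker (aeval f p) := by
  intro x hx
  have hfx : f x = α • x := by simpa [sub_eq_zero] using hx
  obtain ⟨n, hn⟩ := hp
  have hpow : (p.eval α) ^ n • x = 0 := by
    rw [← eval_pow, ← aeval_apply_of_mem_apply_eq_smul hfx, map_pow, hn, LinearMap.zero_apply]
  rw [mem_ker, aeval_apply_of_mem_apply_eq_smul hfx]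
  rcases smul_eq_zero.mp hpow with h | h
  · rw [eq_zero_of_pow_eq_zero h, zero_smul]
  · rw [h, smul_zero]

theorem isSemisimple_restrict_of_le_ker_pow_sub_id [CharZero K] {f : End K U} {d : ℕ}
    (hd : 0 < d) {W : Submodule K U} (hW : ∀ x ∈ W, f x ∈ W)
    (hWker : W ≤ ker (f ^ d - LinearMap.id)) : IsSemisimple (f.restrict hW) := by
  have hsep : (X ^ d - 1 : K[X]).Separable := by
    simpa using separable_X_pow_sub_C (1 : K) (Nat.cast_ne_zero.mpr hd.ne') one_ne_zero
  refine isSemisimple_of_squarefree_aeval_eq_zero hsep.squarefree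
    (LinearMap.ext fun x => Subtype.ext ?_)
  have hx : (f ^ d - LinearMap.id : End K U) x = 0 := hWker x.2
  rw [map_sub, map_pow, aeval_X, map_one, pow_restrict]
  simpa using hx

namespace IsSemisimple

variable {g : End K U}

theorem range_inf_eq_map (hg : g.IsSemisimple) {S : Submodule K U} (hS : S ≤ S.comap g) :
    range g ⊓ S = S.map g := by
  refine le_antisymm ?_ (le_inf map_le_range (map_le_iff_le_comap.mpr hS))
  rintro _ ⟨⟨x, rfl⟩, hxS⟩
  obtain ⟨C, hC, hSC⟩ := isSemisimple_iff.mp hg S ((mem_invtSubmodule g).mpr hS)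
  obtain ⟨s, hs, c, hc, rfl⟩ := mem_sup.mp (hSC.sup_eq_top ▸ mem_top : x ∈ S ⊔ C)
  have hgc : g c = 0 := by
    refine (disjoint_def.mp hSC.disjoint) _ ?_ ((mem_invtSubmodule g).mp hC hc)
    simpa using S.sub_mem hxS (hS hs)
  exact ⟨s, hs, by simp [hgc]⟩

theorem disjoint_ker_range (hg : g.IsSemisimple) : Disjoint (ker g) (range g) := by
  rw [disjoint_iff, inf_comm, hg.range_inf_eq_map (ker_le_comap g), eq_bot_iff,
    map_le_iff_le_comap]
  exact fun x hx => by simpa using hx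

variable [FiniteDimensional K U]

theorem sup_ker_range (hg : g.IsSemisimple) : ker g ⊔ range g = ⊤ := by
  apply eq_top_of_finrank_eq
  have := finrank_sup_add_finrank_inf_eq (ker g) (range g)
  rw [disjoint_iff.mp hg.disjoint_ker_range, finrank_bot] at this
  have := g.finrank_range_add_finrank_ker
  omega

theorem finrank_ker_mapQ_add_finrank_ker_restrict (hg : g.IsSemisimple) (S : Submodule K U)
    (h : ∀ x ∈ S, g x ∈ S) :
    finrank K (ker (S.mapQ S g h)) + finrank K (ker (g.restrict h)) = finrank K (ker g) := by
  have hquot := S.finrank_ker_mapQ_add_finrank g h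
  have hcomap := g.finrank_map_add_finrank_inf_ker (S.comap g)
  have hS := g.finrank_map_add_finrank_inf_ker S
  rw [inf_eq_right.mpr (ker_le_comap g), map_comap_eq, hg.range_inf_eq_map h] at hcomap
  rw [g.finrank_ker_restrict h]
  omega

end IsSemisimple

theorem finrank_ker_sq_of_isSemisimple_restrict [FiniteDimensional K U] {g : End K U}
    {W : Submodule K U} (hW : ∀ x ∈ W, g x ∈ W) (hs : IsSemisimple (g.restrict hW))
    (hker : ker g ≤ W) :
    finrank K (ker (g ^ 2)) = finrank K (ker (W.mapQ W g hW)) + finrank K (ker g) := by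
  set T : End K W := g.restrict hW
  have hinf : W ⊓ ker (g ^ 2) = ker g := by
    refine le_antisymm ?_ (le_inf hker fun x hx => by simp_all [sq])
    rintro x ⟨hxW, hx⟩
    have hT : T ⟨x, hxW⟩ = 0 :=
      disjoint_def.mp hs.disjoint_ker_range _ (Subtype.ext (by simpa [T, sq] using hx)) ⟨_, rfl⟩
    simpa [T] using congrArg Subtype.val hT
  have hsup : W.comap g = W ⊔ ker (g ^ 2) := by
    refine le_antisymm (fun x hx => ?_) (sup_le hW fun x hx => hker (by simpa [sq] using hx))
    obtain ⟨k, hk, _, ⟨w, rfl⟩, hkw⟩ :=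
      mem_sup.mp (hs.sup_ker_range ▸ mem_top : (⟨g x, hx⟩ : W) ∈ ker T ⊔ range T)
    have hgk : g (x - w) = k := by
      have := congrArg Subtype.val hkw
      simp only [T, Submodule.coe_add, coe_restrict_apply] at this
      rw [map_sub, ← this, add_sub_cancel_right]
    refine mem_sup.mpr ⟨w, w.2, x - w, ?_, add_sub_cancel _ _⟩
    simpa [T, sq, hgk] using congrArg Subtype.val hk
  have hquot := W.finrank_ker_mapQ_add_finrank g hW
  have hdim := finrank_sup_add_finrank_inf_eq W (ker (g ^ 2))
  rw [← hsup, hinf] at hdim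
  omega

end Module.End

open Module.End in
theorem jordan_blocks_of_essentially_unipotent_general
    (F V : Type*) [Field F] [CharZero F]
    [AddCommGroup V] [Module F V] [FiniteDimensional F V]
    (M : V →ₗ[F] V) (d : ℕ) (hd : 0 < d)
    (hunip : IsNilpotent (M ^ d - LinearMap.id))
    (W : Submodule F V) (hW : W = LinearMap.ker (M ^ d - LinearMap.id))
    (htriv : LinearMap.range (M ^ d - LinearMap.id) ≤ W)
    (W' : Submodule F V) (hW'W : W' ≤ W)
    (hMW : ∀ x ∈ W, M x ∈ W) (hMW' : ∀ x ∈ W', M x ∈ W')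
    (φ : Module.Dual F (V ⧸ W) ≃ₗ[F] W')
    (hφ : ∀ g : Module.Dual F (V ⧸ W),
      φ ((Submodule.mapQ W W M (fun x hx => hMW x hx)).dualMap g) =
        M.restrict hMW' (φ g)) :
    (M ^ d - LinearMap.id) ^ 2 = 0 ∧
      ∀ α : F,
        (Module.finrank F (LinearMap.ker ((M - α • LinearMap.id) ^ 2)) -
            Module.finrank F (LinearMap.ker (M - α • LinearMap.id)) =
          Module.finrank F
            (LinearMap.ker (M.restrict hMW' - α • LinearMap.id))) ∧
        (2 * Module.finrank F (LinearMap.ker (M - α • LinearMap.id)) -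
            Module.finrank F (LinearMap.ker ((M - α • LinearMap.id) ^ 2)) =
          Module.finrank F
            (LinearMap.ker
              (Submodule.mapQ (W'.comap W.subtype) (W'.comap W.subtype)
                  (M.restrict hMW) (fun x hx => hMW' x.1 hx) -
                α • LinearMap.id))) := by
  refine ⟨LinearMap.ext fun x => by simpa [sq, hW] using htriv ⟨x, rfl⟩, fun α => ?_⟩
  set N := M - α • LinearMap.id
  have hNW : ∀ x ∈ W, N x ∈ W := fun x hx => W.sub_mem (hMW x hx) (W.smul_mem α hx)
  have hNW' : ∀ x ∈ W'.comap W.subtype, N.restrict hNW x ∈ W'.comap W.subtype :=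
    fun x hx => W'.sub_mem (hMW' x hx) (W'.smul_mem α hx)
  have hker : ker N ≤ W := by
    have hP : aeval M (X ^ d - 1 : F[X]) = M ^ d - LinearMap.id := by simp [one_eq_id]
    rw [hW, ← hP]
    exact ker_sub_smul_le_ker_aeval_of_isNilpotent M _ (hP ▸ hunip) α
  have hss : IsSemisimple (N.restrict hNW) := by
    rw [show N.restrict hNW = M.restrict hMW - algebraMap F _ α by
      ext; simp [N, Module.algebraMap_end_apply], isSemisimple_sub_algebraMap_iff]
    exact isSemisimple_restrict_of_le_ker_pow_sub_id hd hMW hW.le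
  have hsq := finrank_ker_sq_of_isSemisimple_restrict hNW hss hker
  have hdual : finrank F (ker (M.restrict hMW' - α • LinearMap.id)) =
      finrank F (ker (W.mapQ W N hNW)) := by
    rw [← φ.finrank_ker_eq_of_comp_eq (f := (W.mapQ W M hMW).dualMap - α • LinearMap.id)
      (fun g => by simp [hφ]), finrank_ker_dualMap_sub_smul, mapQ_sub_smul_id hMW hNW rfl]
  have hadd := hss.finrank_ker_mapQ_add_finrank_ker_restrict _ hNW'
  have hkerW : finrank F (ker (N.restrict hNW)) = finrank F (ker N) := by
    rw [finrank_ker_restrict, inf_eq_right.mpr hker]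
  have hkerW' : finrank F (ker ((N.restrict hNW).restrict hNW')) =
      finrank F (ker (M.restrict hMW' - α • LinearMap.id)) :=
    (comapSubtypeEquivOfLe hW'W).finrank_ker_eq_of_comp_eq fun _ => rfl
  have hquot := congrArg (fun g => finrank F (ker g))
    (mapQ_sub_smul_id (p := W'.comap W.subtype) (f := M.restrict hMW) (α := α)
      (fun x hx => hMW' x.1 hx) hNW' (by ext; simp [N]))
  exact ⟨by omega, by omega⟩

/-- Let `M` be an endomorphism of a finite dimensional vector space `V` over an
algebraically closed field of characteristic zero, and `d > 0` an integer with `M ^ d`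
unipotent. Let `W = ker (M ^ d - id)`, assume `M ^ d` acts trivially on `V / W` (i.e.
`im (M ^ d - id) ⊆ W`), and assume there is an `M`-equivariant isomorphism `φ` between
`(V / W)^∨` and an `M`-stable subspace `W'` of `W`. Then `(M ^ d - id) ^ 2 = 0` and, for
every `α`, the number of Jordan blocks of `M` of size two with eigenvalue `α` equals the
multiplicity of `α` as an eigenvalue of `M` on `W'`, and the number of Jordan blocks of
size one with eigenvalue `α` equals the multiplicity of `α` as an eigenvalue of `M` on
`W / W'`. -/
theorem jordan_blocks_of_essentially_unipotent
    (F V : Type*) [Field F] [IsAlgClosed F] [CharZero F]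
    [AddCommGroup V] [Module F V] [FiniteDimensional F V]
    (M : V →ₗ[F] V) (d : ℕ) (hd : 0 < d)
    (hunip : IsNilpotent (M ^ d - LinearMap.id))
    (W : Submodule F V) (hW : W = LinearMap.ker (M ^ d - LinearMap.id))
    (htriv : LinearMap.range (M ^ d - LinearMap.id) ≤ W)
    (W' : Submodule F V) (hW'W : W' ≤ W)
    (hMW : ∀ x ∈ W, M x ∈ W) (hMW' : ∀ x ∈ W', M x ∈ W')
    (φ : Module.Dual F (V ⧸ W) ≃ₗ[F] W')
    (hφ : ∀ g : Module.Dual F (V ⧸ W),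
      φ ((Submodule.mapQ W W M (fun x hx => hMW x hx)).dualMap g) =
        M.restrict hMW' (φ g)) :
    (M ^ d - LinearMap.id) ^ 2 = 0 ∧
      ∀ α : F,
        (Module.finrank F (LinearMap.ker ((M - α • LinearMap.id) ^ 2)) -
            Module.finrank F (LinearMap.ker (M - α • LinearMap.id)) =
          Module.finrank F
            (LinearMap.ker (M.restrict hMW' - α • LinearMap.id))) ∧
        (2 * Module.finrank F (LinearMap.ker (M - α • LinearMap.id)) -
            Module.finrank F (LinearMap.ker ((M - α • LinearMap.id) ^ 2)) =
          Module.finrank F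
            (LinearMap.ker
              (Submodule.mapQ (W'.comap W.subtype) (W'.comap W.subtype)
                  (M.restrict hMW) (fun x hx => hMW' x.1 hx) -
                α • LinearMap.id))) :=
  jordan_blocks_of_essentially_unipotent_general F V M d hd hunip W hW htriv W' hW'W hMW hMW' φ hφ
end

section
/- Let F be a field of characteristic zero, V a finite-dimensional F-vector space, N a nilpotent endomorphism of V, and W the weight filtration centered at w ∈ ℤ associated to N. If N′ is another nilpotent endomorphism of V such that (N − N′)(W_i) ⊆ W_{i−3} for all i ∈ ℤ, then the weight filtration centered at w associated to N′ coincides with W. -/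
/-- `W` is an ascending filtration on `V`, exhaustive and separated, which is the weight
filtration centered at `w` associated to the nilpotent endomorphism `N`. -/
def IsWeightFiltration {F V : Type*} [Field F] [AddCommGroup V] [Module F V]
    (N : V →ₗ[F] V) (w : ℤ) (W : ℤ → Submodule F V) : Prop :=
  Monotone W ∧
  (∃ a : ℤ, ∀ i ≤ a, W i = ⊥) ∧
  (∃ b : ℤ, ∀ i, b ≤ i → W i = ⊤) ∧
  (∀ i : ℤ, (W i).map N ≤ W (i - 2)) ∧
  (∀ α : ℤ, 0 < α →
    W (w - α) ≤ W (w - α - 1) ⊔ (W (w + α)).map (N ^ α.toNat) ∧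
    ∀ v ∈ W (w + α), (N ^ α.toNat) v ∈ W (w - α - 1) → v ∈ W (w + α - 1))

/-!
Only `N ^ α` modulo `W (w - α - 1)`, restricted to `W (w + α)`, enters the defining conditions of
the weight filtration. Since `N - N'` lowers `W` by three while `N` and `N'` lower it by two, the
telescoping identity `N' ^ (n + 1) - N ^ (n + 1) = N' (N' ^ n - N ^ n) + (N' - N) N ^ n` shows that
`N' ^ α - N ^ α` lowers `W` by `2α + 1`, so it maps `W (w + α)` into `W (w - α - 1)`.
-/

namespace Submodule

variable {R M : Type*} [Ring R] [AddCommGroup M] [Module R M]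

def LowersBy (W : ℤ → Submodule R M) (k : ℤ) (f : M →ₗ[R] M) : Prop :=
  ∀ i, (W i).map f ≤ W (i - k)

namespace LowersBy

variable {W : ℤ → Submodule R M} {k l : ℤ} {f g : M →ₗ[R] M}

theorem apply_mem (hf : LowersBy W k f) {i : ℤ} {v : M} (hv : v ∈ W i) : f v ∈ W (i - k) :=
  hf i (mem_map_of_mem hv)

theorem of_apply_mem (h : ∀ i, ∀ v ∈ W i, f v ∈ W (i - k)) : LowersBy W k f := by
  rintro i _ ⟨v, hv, rfl⟩
  exact h i v hv

theorem congr_shift (hf : LowersBy W k f) (h : k = l) : LowersBy W l f := h ▸ hf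

theorem of_le (hW : Monotone W) (hf : LowersBy W l f) (h : k ≤ l) : LowersBy W k f :=
  of_apply_mem fun _ _ hv => hW (by omega) (hf.apply_mem hv)

theorem add (hf : LowersBy W k f) (hg : LowersBy W k g) : LowersBy W k (f + g) :=
  of_apply_mem fun _ _ hv => add_mem (hf.apply_mem hv) (hg.apply_mem hv)

theorem neg (hf : LowersBy W k f) : LowersBy W k (-f) :=
  of_apply_mem fun _ _ hv => neg_mem (hf.apply_mem hv)

theorem sub (hf : LowersBy W k f) (hg : LowersBy W k g) : LowersBy W k (f - g) :=
  of_apply_mem fun _ _ hv => sub_mem (hf.apply_mem hv) (hg.apply_mem hv)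

theorem mul (hf : LowersBy W k f) (hg : LowersBy W l g) : LowersBy W (k + l) (f * g) :=
  of_apply_mem fun _ _ hv => by
    simpa only [Module.End.mul_apply, sub_sub, add_comm l] using hf.apply_mem (hg.apply_mem hv)

theorem one : LowersBy W 0 (1 : M →ₗ[R] M) :=
  of_apply_mem fun _ _ hv => by simpa using hv

theorem pow (hf : LowersBy W k f) (n : ℕ) : LowersBy W (n * k) (f ^ n) := by
  induction n with
  | zero => simpa using one
  | succ n ih => rw [pow_succ]; exact (ih.mul hf).congr_shift (by push_cast; ring)

theorem pow_succ_sub_pow_succ (hf : LowersBy W k f) (hg : LowersBy W k g)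
    (hfg : LowersBy W l (f - g)) (n : ℕ) :
    LowersBy W (n * k + l) (f ^ (n + 1) - g ^ (n + 1)) := by
  induction n with
  | zero => simpa using hfg
  | succ n ih =>
    have telescope : f ^ (n + 1 + 1) - g ^ (n + 1 + 1) =
        f * (f ^ (n + 1) - g ^ (n + 1)) + (f - g) * g ^ (n + 1) := by
      simp only [pow_succ' _ (n + 1), mul_sub, sub_mul]
      abel
    rw [telescope]
    exact ((hf.mul ih).congr_shift (by push_cast; ring)).add
      ((hfg.mul (hg.pow (n + 1))).congr_shift (by push_cast; ring))

end LowersBy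

theorem sup_map_le_sup_map_of_map_sub_le {P S : Submodule R M} {f g : M →ₗ[R] M}
    (h : P.map (f - g) ≤ S) : S ⊔ P.map g ≤ S ⊔ P.map f := by
  refine sup_le le_sup_left ?_
  rintro _ ⟨v, hv, rfl⟩
  have hfg : f v - g v ∈ S := h (mem_map_of_mem hv)
  simpa using sub_mem (mem_sup_right (mem_map_of_mem (f := f) hv)) (mem_sup_left hfg)

theorem mem_of_apply_mem_of_map_sub_le {P S T : Submodule R M} {f g : M →ₗ[R] M}
    (h : P.map (f - g) ≤ S) (hg : ∀ v ∈ P, g v ∈ S → v ∈ T) :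
    ∀ v ∈ P, f v ∈ S → v ∈ T := by
  intro v hv hfv
  have hfg : f v - g v ∈ S := h (mem_map_of_mem hv)
  exact hg v hv (by simpa using sub_mem hfv hfg)

end Submodule

open Submodule in
theorem weightFiltration_eq_of_sub_shift_general
    (F V : Type*) [Field F] [AddCommGroup V] [Module F V]
    (N : V →ₗ[F] V) (w : ℤ) (W : ℤ → Submodule F V)
    (hW : IsWeightFiltration N w W)
    (N' : V →ₗ[F] V)
    (hshift : ∀ i : ℤ, (W i).map (N - N') ≤ W (i - 3)) :
    IsWeightFiltration N' w W := by
  obtain ⟨hmono, hbot, htop, hN2, hiso⟩ := hW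
  have hshift' : LowersBy W 3 (N' - N) := by
    simpa only [neg_sub] using LowersBy.neg hshift
  have hN'2 : LowersBy W 2 N' := by
    simpa using LowersBy.sub hN2 (LowersBy.of_le hmono hshift (by norm_num))
  refine ⟨hmono, hbot, htop, hN'2, fun α hα => ?_⟩
  obtain ⟨n, rfl⟩ : ∃ n : ℕ, α = n + 1 := ⟨α.toNat - 1, by omega⟩
  have hpow : (W (w + (n + 1))).map (N' ^ (n + 1) - N ^ (n + 1)) ≤ W (w - (n + 1) - 1) := by
    have := hN'2.pow_succ_sub_pow_succ hN2 hshift' n (w + (n + 1))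
    rwa [show w + (n + 1) - (n * 2 + 3) = w - (n + 1) - 1 by ring] at this
  have htoNat : ((n : ℤ) + 1).toNat = n + 1 := by omega
  obtain ⟨hsurj, hinj⟩ := hiso _ hα
  rw [htoNat] at hsurj hinj ⊢
  exact ⟨hsurj.trans (sup_map_le_sup_map_of_map_sub_le hpow),
    mem_of_apply_mem_of_map_sub_le hpow hinj⟩

/-- If `W` is the weight filtration centered at `w` associated to a nilpotent endomorphism
`N` of a finite dimensional vector space over a field of characteristic zero, and `N'` is
another nilpotent endomorphism with `(N - N') (W i) ⊆ W (i - 3)` for all `i`, then the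
weight filtration centered at `w` associated to `N'` coincides with `W`. -/
theorem weightFiltration_eq_of_sub_shift
    (F V : Type*) [Field F] [CharZero F] [AddCommGroup V] [Module F V]
    [FiniteDimensional F V]
    (N : V →ₗ[F] V) (hN : IsNilpotent N) (w : ℤ) (W : ℤ → Submodule F V)
    (hW : IsWeightFiltration N w W)
    (N' : V →ₗ[F] V) (hN' : IsNilpotent N')
    (hshift : ∀ i : ℤ, (W i).map (N - N') ≤ W (i - 3)) :
    IsWeightFiltration N' w W :=
  weightFiltration_eq_of_sub_shift_general F V N w W hW N' hshift
end

section
/- Let F be a field of characteristic zero, V a finite-dimensional F-vector space, N a nilpotent endomorphism of V, and W the weight filtration centered at w ∈ ℤ associated to N. If S is an automorphism of V commuting with N, then N ∘ S is nilpotent and the weight filtration centered at w associated to N ∘ S coincides with W; moreover S(W_i) = W_i for all i ∈ ℤ. -/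
/-!
The weight filtration is unique: by descending induction on `α`, `W (w + α)` is the preimage
under `N ^ (α + 1)` of `W (w - α - 2)`, and
`W (w - α - 1) = W (w - α - 2) + N ^ (α + 1) W (w + α + 1)`.
Since `S` commutes with `N`, transporting `W` along `S` gives another weight filtration of `N`,
so `S (W i) = W i`. Then `(N S) ^ k = N ^ k S ^ k` with `S ^ k` preserving every `W i`, so the
defining conditions for `N S` reduce to those for `N`.
-/

namespace Submodule

variable {R M M' : Type*} [CommSemiring R] [AddCommMonoid M] [Module R M]
  [AddCommMonoid M'] [Module R M']

theorem map_pow_eq_self {f : Module.End R M} {p : Submodule R M} (h : p.map f = p) (k : ℕ) :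
    p.map (f ^ k) = p := by
  induction k with
  | zero => simp [Module.End.one_eq_id]
  | succ k ih => rw [pow_succ, Module.End.mul_eq_comp, map_comp, h, ih]

theorem comap_pow_eq_self {f : Module.End R M} {p : Submodule R M} (h : p.comap f = p) (k : ℕ) :
    p.comap (f ^ k) = p := by
  induction k with
  | zero => simp [Module.End.one_eq_id]
  | succ k ih => rw [pow_succ', Module.End.mul_eq_comp, comap_comp, h, ih]

theorem map_conj_map (e : M ≃ₗ[R] M') (f : Module.End R M) (p : Submodule R M) :
    (p.map (e : M →ₗ[R] M')).map (e.conj f) = (p.map f).map (e : M →ₗ[R] M') := by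
  rw [← map_comp, ← map_comp]
  congr 1
  ext v
  simp

end Submodule

namespace IsWeightFiltration

variable {F V : Type*} [Field F] [AddCommGroup V] [Module F V]
  {N : V →ₗ[F] V} {w : ℤ} {W : ℤ → Submodule F V}

theorem monotone (hW : IsWeightFiltration N w W) : Monotone W := hW.1

theorem map_le (hW : IsWeightFiltration N w W) (i : ℤ) : (W i).map N ≤ W (i - 2) := hW.2.2.2.1 i

theorem map_pow_le (hW : IsWeightFiltration N w W) (j : ℕ) (i : ℤ) :
    (W i).map (N ^ j) ≤ W (i - 2 * j) := by
  induction j generalizing i with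
  | zero => simp [Module.End.one_eq_id]
  | succ j ih =>
    rw [pow_succ, Module.End.mul_eq_comp, Submodule.map_comp]
    calc ((W i).map N).map (N ^ j) ≤ (W (i - 2)).map (N ^ j) := Submodule.map_mono (hW.map_le i)
      _ ≤ W (i - 2 - 2 * j) := ih _
      _ = W (i - 2 * ↑(j + 1)) := by push_cast; ring_nf

theorem le_sup_map_pow (hW : IsWeightFiltration N w W) (α : ℕ) :
    W (w - α - 1) ≤ W (w - α - 2) ⊔ (W (w + α + 1)).map (N ^ (α + 1)) := by
  have h := (hW.2.2.2.2 ((α + 1 : ℕ) : ℤ) (by positivity)).1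
  rwa [Int.toNat_natCast, show w - ((α + 1 : ℕ) : ℤ) - 1 = w - α - 2 by push_cast; ring,
    show w - ((α + 1 : ℕ) : ℤ) = w - α - 1 by push_cast; ring,
    show w + ((α + 1 : ℕ) : ℤ) = w + α + 1 by push_cast; ring] at h

theorem mem_of_pow_mem (hW : IsWeightFiltration N w W) (α : ℕ) {v : V}
    (hv : v ∈ W (w + α + 1)) (hNv : (N ^ (α + 1)) v ∈ W (w - α - 2)) : v ∈ W (w + α) := by
  have h := (hW.2.2.2.2 ((α + 1 : ℕ) : ℤ) (by positivity)).2 v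
  rw [Int.toNat_natCast, show w - ((α + 1 : ℕ) : ℤ) - 1 = w - α - 2 by push_cast; ring,
    show w + ((α + 1 : ℕ) : ℤ) - 1 = w + α by push_cast; ring,
    show w + ((α + 1 : ℕ) : ℤ) = w + α + 1 by push_cast; ring] at h
  exact h hv hNv

theorem eq_sup_map_pow (hW : IsWeightFiltration N w W) (α : ℕ) :
    W (w - α - 1) = W (w - α - 2) ⊔ (W (w + α + 1)).map (N ^ (α + 1)) := by
  refine le_antisymm (hW.le_sup_map_pow α) (sup_le (hW.monotone (by omega)) ?_)
  calc (W (w + α + 1)).map (N ^ (α + 1)) ≤ W (w + α + 1 - 2 * ↑(α + 1)) := hW.map_pow_le _ _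
    _ = W (w - α - 1) := by push_cast; ring_nf

theorem mem_iff_pow_mem (hW : IsWeightFiltration N w W) (k : ℕ) (v : V) :
    v ∈ W (w + k) ↔ (N ^ (k + 1)) v ∈ W (w - k - 2) := by
  constructor
  · intro hv
    have h := hW.map_pow_le (k + 1) (w + k) ⟨v, hv, rfl⟩
    rwa [show w + k - 2 * ((k + 1 : ℕ) : ℤ) = w - k - 2 by push_cast; ring] at h
  · intro hNv
    obtain ⟨b, hb⟩ := hW.2.2.1
    suffices ∀ d : ℕ, v ∈ W (w + ↑(k + d)) → v ∈ W (w + k) from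
      this (b - (w + k)).toNat (by rw [hb _ (by omega)]; trivial)
    intro d
    induction d with
    | zero => simp
    | succ d ih =>
      intro hv
      refine ih (hW.mem_of_pow_mem (k + d) ?_ ?_)
      · rwa [show w + ((k + d : ℕ) : ℤ) + 1 = w + ((k + (d + 1) : ℕ) : ℤ) by
          push_cast; ring]
      have h := hW.map_pow_le d _ ⟨_, hNv, rfl⟩
      rw [← Module.End.mul_apply, ← pow_add, show d + (k + 1) = k + d + 1 by ring] at h
      exact hW.monotone (by push_cast; omega) h

theorem eventually_eq_top_and_eq_bot (hW : IsWeightFiltration N w W) :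
    ∀ᶠ α : ℕ in Filter.atTop, W (w + α) = ⊤ ∧ W (w - α - 1) = ⊥ := by
  obtain ⟨-, ⟨a, ha⟩, ⟨b, hb⟩, -⟩ := hW
  refine Filter.eventually_atTop.2 ⟨(b - w).toNat + (w - a).toNat, fun α hα => ?_⟩
  exact ⟨hb _ (by omega), ha _ (by omega)⟩

theorem unique {W' : ℤ → Submodule F V} (hW : IsWeightFiltration N w W)
    (hW' : IsWeightFiltration N w W') : W = W' := by
  let P : ℕ → Prop := fun α => W (w + α) = W' (w + α) ∧ W (w - α - 1) = W' (w - α - 1)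
  obtain ⟨M, hM⟩ := Filter.eventually_atTop.1
    (hW.eventually_eq_top_and_eq_bot.and hW'.eventually_eq_top_and_eq_bot)
  have step : ∀ α, P (α + 1) → P α := by
    rintro α ⟨hup, hlow⟩
    replace hup : W (w + α + 1) = W' (w + α + 1) := by convert hup using 2 <;> push_cast <;> ring
    replace hlow : W (w - α - 2) = W' (w - α - 2) := by
      convert hlow using 2 <;> push_cast <;> ring
    refine ⟨Submodule.ext fun v => ?_, ?_⟩
    · rw [hW.mem_iff_pow_mem, hW'.mem_iff_pow_mem, hlow]
    · rw [hW.eq_sup_map_pow, hW'.eq_sup_map_pow, hup, hlow]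
  have hP : ∀ k α, M ≤ α + k → P α := by
    intro k
    induction k with
    | zero =>
      intro α hα
      obtain ⟨⟨h1, h2⟩, h1', h2'⟩ := hM α hα
      exact ⟨h1.trans h1'.symm, h2.trans h2'.symm⟩
    | succ k ih => exact fun α hα => step α (ih (α + 1) (by omega))
  funext i
  rcases le_or_gt w i with h | h
  · obtain ⟨α, rfl⟩ : ∃ α : ℕ, i = w + α := ⟨(i - w).toNat, by omega⟩
    exact (hP M α (by omega)).1
  · obtain ⟨α, rfl⟩ : ∃ α : ℕ, i = w - α - 1 := ⟨(w - i - 1).toNat, by omega⟩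
    exact (hP M α (by omega)).2

theorem map_linearEquiv {V' : Type*} [AddCommGroup V'] [Module F V']
    (hW : IsWeightFiltration N w W) (e : V ≃ₗ[F] V') :
    IsWeightFiltration (e.conj N) w (fun i => (W i).map (e : V →ₗ[F] V')) := by
  obtain ⟨hmono, ⟨a, ha⟩, ⟨b, hb⟩, hmap, hiso⟩ := hW
  have hpow (k : ℕ) : e.conj N ^ k = e.conj (N ^ k) := (map_pow e.conjRingEquiv N k).symm
  refine ⟨fun i j hij => Submodule.map_mono (hmono hij), ⟨a, fun i hi => by simp [ha i hi]⟩,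
    ⟨b, fun i hi => by simp [hb i hi]⟩, fun i => ?_,
    fun α hα => ⟨?_, fun v hv hNv => ?_⟩⟩
  · rw [Submodule.map_conj_map]
    exact Submodule.map_mono (hmap i)
  · rw [hpow, Submodule.map_conj_map, ← Submodule.map_sup]
    exact Submodule.map_mono (hiso α hα).1
  · rw [Submodule.mem_map_equiv] at hv hNv ⊢
    rw [hpow, LinearEquiv.conj_apply_apply, LinearEquiv.symm_apply_apply] at hNv
    exact (hiso α hα).2 _ hv hNv

theorem comp_of_map_eq {S : Module.End F V} (hW : IsWeightFiltration N w W) (hcomm : Commute N S)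
    (hS : Function.Injective S) (hSW : ∀ i, (W i).map S = W i) :
    IsWeightFiltration (N ∘ₗ S) w W := by
  obtain ⟨hmono, hbot, htop, hmap, hiso⟩ := hW
  have hSW' (i : ℤ) : (W i).comap S = W i := by
    nth_rw 1 [← hSW i]
    exact Submodule.comap_map_eq_of_injective hS (W i)
  have hpow (k : ℕ) : (N ∘ₗ S) ^ k = N ^ k * S ^ k := hcomm.mul_pow k
  refine ⟨hmono, hbot, htop, fun i => ?_, fun α hα => ⟨?_, fun v hv hNv => ?_⟩⟩
  · rw [Submodule.map_comp, hSW]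
    exact hmap i
  · rw [hpow, Module.End.mul_eq_comp, Submodule.map_comp, Submodule.map_pow_eq_self (hSW _)]
    exact (hiso α hα).1
  · rw [hpow, Module.End.mul_apply] at hNv
    have hSv : (S ^ α.toNat) v ∈ W (w + α) :=
      Submodule.map_pow_eq_self (hSW _) α.toNat ▸ Submodule.mem_map_of_mem hv
    rw [← Submodule.comap_pow_eq_self (hSW' _) α.toNat]
    exact (hiso α hα).2 _ hSv hNv

end IsWeightFiltration

theorem weightFiltration_comp_automorphism_general
    (F V : Type*) [Field F] [AddCommGroup V] [Module F V]
    (N : V →ₗ[F] V) (hN : IsNilpotent N) (w : ℤ) (W : ℤ → Submodule F V)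
    (hW : IsWeightFiltration N w W)
    (S : V →ₗ[F] V) (hS : Function.Bijective S) (hcomm : Commute N S) :
    IsNilpotent (N ∘ₗ S) ∧ IsWeightFiltration (N ∘ₗ S) w W ∧
      ∀ i : ℤ, (W i).map S = W i := by
  let e := LinearEquiv.ofBijective S hS
  have hconj : e.conj N = N := by
    ext v
    rw [LinearEquiv.conj_apply_apply]
    exact (LinearMap.congr_fun hcomm (e.symm v)).symm.trans (congrArg N (e.apply_symm_apply v))
  have hSW : ∀ i, (W i).map S = W i := congrFun ((hconj ▸ hW.map_linearEquiv e).unique hW)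
  exact ⟨hcomm.isNilpotent_mul_right hN, hW.comp_of_map_eq hcomm hS.injective hSW, hSW⟩

/-- Let `W` be the weight filtration centered at `w` associated to a nilpotent endomorphism
`N` of a finite dimensional vector space over a field of characteristic zero. If `S` is an
automorphism of `V` commuting with `N`, then `N ∘ S` is nilpotent, the weight filtration
centered at `w` associated to `N ∘ S` coincides with `W`, and moreover `S (W i) = W i`
for all `i`. -/
theorem weightFiltration_comp_automorphism
    (F V : Type*) [Field F] [CharZero F] [AddCommGroup V] [Module F V]
    [FiniteDimensional F V]
    (N : V →ₗ[F] V) (hN : IsNilpotent N) (w : ℤ) (W : ℤ → Submodule F V)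
    (hW : IsWeightFiltration N w W)
    (S : V →ₗ[F] V) (hS : Function.Bijective S) (hcomm : Commute N S) :
    IsNilpotent (N ∘ₗ S) ∧ IsWeightFiltration (N ∘ₗ S) w W ∧
      ∀ i : ℤ, (W i).map S = W i :=
  weightFiltration_comp_automorphism_general F V N hN w W hW S hS hcomm
end

section
/- Let F be a field of characteristic zero, V a finite-dimensional F-vector space, N a nilpotent endomorphism of V, and W the weight filtration centered at w ∈ ℤ associated to N. Then the weight filtration on the dual space V^∨ centered at −w associated to the nilpotent operator −N^∨ (minus the transpose of N) is the dual filtration W^∨, defined by (W^∨)_i = (W_{−i−1})^⊥, the annihilator of W_{−i−1} in V^∨. -/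
theorem LinearMap.dualMap_pow {R M : Type*} [CommSemiring R] [AddCommMonoid M] [Module R M]
    (f : Module.End R M) (k : ℕ) : (f ^ k).dualMap = f.dualMap ^ k := by
  induction k with
  | zero => exact LinearMap.dualMap_id
  | succ k ih =>
    rw [pow_succ, pow_succ', ← ih, Module.End.mul_eq_comp, Module.End.mul_eq_comp,
      LinearMap.dualMap_comp_dualMap]

namespace Submodule

theorem dualAnnihilator_map_eq_comap_dualMap {R M₁ M₂ : Type*} [CommSemiring R]
    [AddCommMonoid M₁] [Module R M₁] [AddCommMonoid M₂] [Module R M₂]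
    (A : Submodule R M₁) (f : M₁ →ₗ[R] M₂) :
    (A.map f).dualAnnihilator = A.dualAnnihilator.comap f.dualMap := by
  ext φ
  simp [mem_dualAnnihilator]

theorem dualAnnihilator_comap_eq_map_dualMap {K V₁ V₂ : Type*} [Field K]
    [AddCommGroup V₁] [Module K V₁] [AddCommGroup V₂] [Module K V₂]
    (B : Submodule K V₂) (f : V₁ →ₗ[K] V₂) :
    (B.comap f).dualAnnihilator = B.dualAnnihilator.map f.dualMap := by
  have hker : B.comap f = LinearMap.ker (B.mkQ ∘ₗ f) := by
    rw [LinearMap.ker_comp, ker_mkQ]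
  rw [hker, ← LinearMap.range_dualMap_eq_dualAnnihilator_ker,
    ← LinearMap.dualMap_comp_dualMap, LinearMap.range_comp, range_dualMap_mkQ_eq]

end Submodule

namespace IsWeightFiltration

variable {F V : Type*} [Field F] [AddCommGroup V] [Module F V]
  {N : V →ₗ[F] V} {w : ℤ} {W : ℤ → Submodule F V}

theorem neg (hW : IsWeightFiltration N w W) : IsWeightFiltration (-N) w W := by
  obtain ⟨hmono, hbot, htop, hmap, hprim⟩ := hW
  refine ⟨hmono, hbot, htop, fun i => by simpa only [Submodule.map_neg] using hmap i,
    fun α hα => ?_⟩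
  rcases neg_one_pow_eq_or (Module.End F V) α.toNat with hsign | hsign
  · rw [neg_pow, hsign, one_mul]
    exact hprim α hα
  · rw [neg_pow, hsign, neg_one_mul]
    simpa only [Submodule.map_neg, LinearMap.neg_apply, neg_mem_iff] using hprim α hα

theorem dualAnnihilator (hW : IsWeightFiltration N w W) :
    IsWeightFiltration N.dualMap (-w) (fun i => (W (-i - 1)).dualAnnihilator) := by
  obtain ⟨hmono, ⟨a, ha⟩, ⟨b, hb⟩, hmap, hprim⟩ := hW
  refine ⟨fun i j hij => Submodule.dualAnnihilator_anti (hmono (by omega)),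
    ⟨-b - 1, fun i hi => ?_⟩, ⟨-a - 1, fun i hi => ?_⟩, fun i => ?_, fun α hα => ?_⟩
  · simp only [hb (-i - 1) (by omega), Submodule.dualAnnihilator_top]
  · simp only [ha (-i - 1) (by omega), Submodule.dualAnnihilator_bot]
  · have hN : W (-(i - 2) - 1) ≤ (W (-i - 1)).comap N := by
      rw [← Submodule.map_le_iff_le_comap]
      simpa only [show -(i - 2) - 1 - 2 = -i - 1 by ring] using hmap (-(i - 2) - 1)
    exact (Submodule.dualAnnihilator_map_dualMap_le _ _).trans
      (Submodule.dualAnnihilator_anti hN)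
  · obtain ⟨hsurj, hinj⟩ := hprim α hα
    rw [← LinearMap.dualMap_pow]
    simp only [show -(-w - α) - 1 = w + α - 1 by ring, show -(-w - α - 1) - 1 = w + α by ring,
      show -(-w + α) - 1 = w - α - 1 by ring, show -(-w + α - 1) - 1 = w - α by ring]
    constructor
    · calc (W (w + α - 1)).dualAnnihilator
          ≤ (W (w + α) ⊓ (W (w - α - 1)).comap (N ^ α.toNat)).dualAnnihilator :=
            Submodule.dualAnnihilator_anti fun v hv => hinj v hv.1 hv.2
        _ = _ := by
          rw [Subspace.dualAnnihilator_inf_eq, Submodule.dualAnnihilator_comap_eq_map_dualMap]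
    · intro φ hφB hφA
      have hφ : φ ∈ (W (w - α - 1) ⊔ (W (w + α)).map (N ^ α.toNat)).dualAnnihilator := by
        rw [Submodule.dualAnnihilator_sup_eq, Submodule.dualAnnihilator_map_eq_comap_dualMap]
        exact ⟨hφB, hφA⟩
      exact Submodule.dualAnnihilator_anti hsurj hφ

end IsWeightFiltration

theorem weightFiltration_dual_general
    (F V : Type*) [Field F] [AddCommGroup V] [Module F V]
    (N : V →ₗ[F] V) (w : ℤ) (W : ℤ → Submodule F V)
    (hW : IsWeightFiltration N w W) :
    IsWeightFiltration (-N.dualMap) (-w)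
      (fun i : ℤ => (W (-i - 1)).dualAnnihilator) := by
  have hdual : -N.dualMap = (-N).dualMap := by
    ext φ v
    simp
  rw [hdual]
  exact hW.neg.dualAnnihilator

/-- Let `W` be the weight filtration centered at `w` associated to a nilpotent endomorphism
`N` of a finite dimensional vector space over a field of characteristic zero. Then the
weight filtration on the dual space `V^∨` centered at `-w` associated to `-N^∨` is the dual
filtration `(W^∨)_i = (W_{-i-1})^⊥` (the annihilator of `W_{-i-1}` in `V^∨`). -/
theorem weightFiltration_dual
    (F V : Type*) [Field F] [CharZero F] [AddCommGroup V] [Module F V]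
    [FiniteDimensional F V]
    (N : V →ₗ[F] V) (hN : IsNilpotent N) (w : ℤ) (W : ℤ → Submodule F V)
    (hW : IsWeightFiltration N w W) :
    IsWeightFiltration (-N.dualMap) (-w)
      (fun i : ℤ => (W (-i - 1)).dualAnnihilator) :=
  weightFiltration_dual_general F V N w W hW
end
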